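/- For every n ≥ 1, the number of points of Σ fixed by σ_τ^n equals |S|^n. -/

import Mathlib

/-!
Iterating `σ_τ` `k` times shifts every coordinate by `k`, and a coordinate landing at a negative
index gets `τ` applied to it, after which `τ` no longer acts. Hence a fixed point of `σ_τ^n` is
`n`-periodic on its nonnegative half, and its negative half is the `τ`-image of the periodic
continuation of that word. So the fixed points correspond exactly to words `ZMod n → S`.
-/

/-- The zip shift space condition: `S`-valued at indices `≥ 0`, `Z`-valued at indices `< 0`. -/
def IsZipSeq (S Z : Type) (x : ℤ → S ⊕ Z) : Prop :=
  ∀ i : ℤ, (0 ≤ i → (x i).isLeft) ∧ (i < 0 → (x i).isRight)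

/-- The zip shift space `Σ` over alphabets `S` and `Z`. -/
def ZipSeq (S Z : Type) := {x : ℤ → S ⊕ Z // IsZipSeq S Z x}

/-- `M(x,y) = min { |i| : x_i ≠ y_i }`. -/
noncomputable def zipM {S Z : Type} (x y : ZipSeq S Z) : ℕ :=
  sInf {n : ℕ | ∃ i : ℤ, i.natAbs = n ∧ x.1 i ≠ y.1 i}

open Classical in
/-- The metric `d(x,y) = 2^{-M(x,y)}` for `x ≠ y`, and `d(x,x) = 0`. -/
noncomputable def zipDist {S Z : Type} (x y : ZipSeq S Z) : ℝ :=
  if x = y then 0 else (1 / 2 : ℝ) ^ zipM x y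

/-- Auxiliary: apply `τ` to the left (`S`) component, landing in `Z`. -/
def mapTau {S Z : Type} (τ : S → Z) : S ⊕ Z → S ⊕ Z :=
  Sum.elim (fun s => Sum.inr (τ s)) Sum.inr

/-- The full zip shift map `σ_τ`: shift left by one, applying `τ` to the symbol
moving from index `0` to index `-1`. -/
def zipShift {S Z : Type} (τ : S → Z) (x : ZipSeq S Z) : ZipSeq S Z :=
  ⟨fun i => if i = -1 then mapTau τ (x.1 0) else x.1 (i + 1), by
    intro i
    constructor
    · intro hi
      have hne : i ≠ -1 := by omega
      simpa [hne] using (x.2 (i + 1)).1 (by omega)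
    · intro hi
      by_cases h : i = -1
      · rcases hx0 : x.1 0 with s | z <;> simp [h, mapTau, hx0]
      · simpa [h] using (x.2 (i + 1)).2 (by omega)⟩

open Function

namespace ZipSeq

variable {S Z : Type}

lemma ext {x y : ZipSeq S Z} (h : ∀ i, x.1 i = y.1 i) : x = y :=
  Subtype.ext (funext h)

def symbolAt (x : ZipSeq S Z) (j : ℕ) : S :=
  (x.1 j).getLeft ((x.2 j).1 (Int.natCast_nonneg j))

lemma inl_symbolAt (x : ZipSeq S Z) (j : ℕ) : Sum.inl (x.symbolAt j) = x.1 j := by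
  have := (x.2 j).1 (Int.natCast_nonneg j)
  cases h : x.1 j <;> simp_all [symbolAt]

end ZipSeq

section Dynamics

variable {S Z : Type} (τ : S → Z)

lemma mapTau_of_isRight {v : S ⊕ Z} (h : v.isRight) : mapTau τ v = v := by
  cases v <;> simp_all [mapTau]

lemma zipShift_iterate_apply (k : ℕ) (x : ZipSeq S Z) (i : ℤ) :
    ((zipShift τ)^[k] x).1 i = if 0 ≤ i then x.1 (i + k) else mapTau τ (x.1 (i + k)) := by
  induction k generalizing i with
  | zero =>
    split_ifs with hi
    · simp
    · simp [mapTau_of_isRight τ ((x.2 i).2 (by omega))]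
  | succ k ih =>
    rw [iterate_succ_apply']
    show (if i = -1 then _ else _) = _
    split_ifs with h₁ h₂ h₂ <;> try omega
    · rw [ih, if_pos le_rfl, h₁, Nat.cast_succ]; ring_nf
    · rw [ih, if_pos (by omega), Nat.cast_succ]; ring_nf
    · rw [ih, if_neg (by omega), Nat.cast_succ]; ring_nf

end Dynamics

section PeriodicPoints

variable {S Z : Type} (τ : S → Z) {n : ℕ} {p : ZipSeq S Z}

lemma Function.IsPeriodicPt.zipSeq_apply_add_mul (hp : IsPeriodicPt (zipShift τ) n p) (k : ℕ)
    {i : ℤ} (hi : 0 ≤ i) : p.1 (i + n * k) = p.1 i := by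
  have h := congrArg (fun q : ZipSeq S Z => q.1 i) (hp.mul_const k)
  simpa [zipShift_iterate_apply, hi] using h

lemma Function.IsPeriodicPt.zipSeq_apply_eq_mapTau_add_mul
    (hp : IsPeriodicPt (zipShift τ) n p) (k : ℕ) {i : ℤ} (hi : i < 0) : p.1 i = mapTau τ (p.1 (i + n * k)) := by
  have h := congrArg (fun q : ZipSeq S Z => q.1 i) (hp.mul_const k)
  simpa [zipShift_iterate_apply, not_le.mpr hi] using h.symm

variable [NeZero n]

lemma Function.IsPeriodicPt.zipSeq_apply_eq_val (hp : IsPeriodicPt (zipShift τ) n p)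
    {i : ℤ} (hi : 0 ≤ i) : p.1 i = p.1 (i : ZMod n).val := by
  have hq : 0 ≤ i / n := Int.ediv_nonneg hi (Int.natCast_nonneg n)
  rw [ZMod.val_intCast, ← hp.zipSeq_apply_add_mul τ (i / n).toNat
    (Int.emod_nonneg i (by exact_mod_cast NeZero.ne n)), Int.toNat_of_nonneg hq,
    Int.emod_add_mul_ediv]

lemma Function.IsPeriodicPt.zipSeq_apply_eq_mapTau_val (hp : IsPeriodicPt (zipShift τ) n p)
    {i : ℤ} (hi : i < 0) : p.1 i = mapTau τ (p.1 (i : ZMod n).val) := by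
  have hn : (1 : ℤ) ≤ n := by have := NeZero.ne n; omega
  have hk : 0 ≤ i + n * i.natAbs := by
    have : (i.natAbs : ℤ) = -i := by omega
    nlinarith
  rw [hp.zipSeq_apply_eq_mapTau_add_mul τ i.natAbs hi, hp.zipSeq_apply_eq_val τ hk]
  simp

end PeriodicPoints

section Counting

variable {S Z : Type} (τ : S → Z) {n : ℕ}

-- Indexing the word by `ZMod n` makes `n`-periodicity the identity `(n : ZMod n) = 0`.
def periodicZipSeq (w : ZMod n → S) : ZipSeq S Z :=
  ⟨fun i => if 0 ≤ i then Sum.inl (w i) else Sum.inr (τ (w i)), fun i => by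
    constructor <;> intro hi <;> simp [not_le.mpr, *]⟩

lemma periodicZipSeq_apply_of_nonneg (w : ZMod n → S) {i : ℤ} (hi : 0 ≤ i) :
    (periodicZipSeq τ w).1 i = Sum.inl (w i) :=
  if_pos hi

lemma periodicZipSeq_apply_of_neg (w : ZMod n → S) {i : ℤ} (hi : i < 0) :
    (periodicZipSeq τ w).1 i = mapTau τ (Sum.inl (w i)) :=
  if_neg (not_le.mpr hi)

lemma periodicZipSeq_isPeriodicPt (w : ZMod n → S) :
    IsPeriodicPt (zipShift τ) n (periodicZipSeq τ w) := by
  refine ZipSeq.ext fun i => ?_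
  rw [zipShift_iterate_apply]
  simp only [periodicZipSeq]
  split_ifs <;> first | omega | simp [mapTau]

variable [NeZero n]

def ptsOfPeriodZipShiftEquiv : ptsOfPeriod (zipShift τ) n ≃ (ZMod n → S) where
  toFun p k := p.1.symbolAt k.val
  invFun w := ⟨periodicZipSeq τ w, periodicZipSeq_isPeriodicPt τ w⟩
  left_inv p := by
    have hp : IsPeriodicPt (zipShift τ) n p := p.2
    refine Subtype.ext <| ZipSeq.ext fun i => ?_
    rcases le_or_gt 0 i with hi | hi
    · rw [periodicZipSeq_apply_of_nonneg τ _ hi, ZipSeq.inl_symbolAt,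
        hp.zipSeq_apply_eq_val τ hi]
    · rw [periodicZipSeq_apply_of_neg τ _ hi, ZipSeq.inl_symbolAt,
        hp.zipSeq_apply_eq_mapTau_val τ hi]
  right_inv w := funext fun k => by
    apply Sum.inl_injective (β := Z)
    rw [ZipSeq.inl_symbolAt, periodicZipSeq_apply_of_nonneg τ _ (Int.natCast_nonneg _),
      Int.cast_natCast, ZMod.natCast_zmod_val]

end Counting

theorem zipShift_card_periodic_general (S Z : Type) [Fintype S]
    (τ : S → Z) (n : ℕ) (hn : 1 ≤ n) :
    Nat.card {p : ZipSeq S Z // (zipShift τ)^[n] p = p} = Fintype.card S ^ n := by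
  have : NeZero n := ⟨by omega⟩
  calc Nat.card {p : ZipSeq S Z // (zipShift τ)^[n] p = p}
      = Nat.card (ZMod n → S) := Nat.card_congr (ptsOfPeriodZipShiftEquiv τ)
    _ = Fintype.card S ^ n := by rw [Nat.card_eq_fintype_card, Fintype.card_fun, ZMod.card]

/-- for every `n ≥ 1`, the number of points fixed by `σ_τ^n`
equals `|S|^n`. -/
theorem zipShift_card_periodic (S Z : Type) [Fintype S] [Fintype Z]
    (τ : S → Z) (hτ : Function.Surjective τ) (n : ℕ) (hn : 1 ≤ n) :
    Nat.card {p : ZipSeq S Z // (zipShift τ)^[n] p = p} = Fintype.card S ^ n :=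
  zipShift_card_periodic_general S Z τ n hn
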